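/- Let d ≥ 1, let Q₀ be a fixed real d×d matrix with all row sums zero, let μ : ℝ → ℝ be continuous, and let q : ℝ → ℝ^d be continuous with q_1(t) + ⋯ + q_d(t) = 0 for all t. Set Q(t) := μ(t)·Q₀ + C_{q(t)} and u(t) := ∫₀ᵗ μ(τ)dτ. Define the Peano–Baker terms I_0(t) := I (identity) and I_{n+1}(t) := ∫₀ᵗ I_n(τ)·Q(τ) dτ, and the vectors q^{(1)}(t) := ∫₀ᵗ q(τ)dτ and q^{(n+1)}(t) := ∫₀ᵗ μ(τ)·q^{(n)}(τ) dτ. Then for every n ≥ 1 and every t ≥ 0: I_n(t) = (u(t)ⁿ/n!)·Q₀ⁿ + C_{q^{(n)}(t)}·Q₀^{n−1}, and moreover q^{(n)}(t) has entry sum zero, so C_{q^{(n)}(t)}·Q₀^{n−1} is a traceless equal-rows matrix. -/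

import Mathlib

/-!
The ansatz `Iₘ₊₁ = (uᵐ⁺¹/(m+1)!) Q₀ᵐ⁺¹ + C_{q⁽ᵐ⁺¹⁾} Q₀ᵐ` survives one Peano–Baker step. Multiplying
it by `Q = μ Q₀ + C_q`, the cross terms vanish: `Q₀ᵏ C_w = 0` for `k ≥ 1` because `Q₀` has zero
row sums, and `C_c C_w = (∑ c) C_w = 0` because the vectors `q⁽ᵐ⁾ Q₀ᵏ` have entry sum zero. What
remains, `μ uᵐ⁺¹/(m+1)! Q₀ᵐ⁺² + C_{μ q⁽ᵐ⁺¹⁾} Q₀ᵐ⁺¹`, integrates to the ansatz for `m + 1` since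
`u' = μ`.
-/

open Matrix

/-- `eqRows d x` is the `d × d` real matrix all of whose rows equal the row vector `x`. -/
def eqRows (d : ℕ) (x : Fin d → ℝ) : Matrix (Fin d) (Fin d) ℝ :=
  Matrix.of fun _ j => x j

section IntervalIntegral

variable {ι : Type*} [Fintype ι] {a b : ℝ}

theorem intervalIntegral_pi_apply {w : ℝ → ι → ℝ}
    (hw : IntervalIntegrable w MeasureTheory.volume a b) (i : ι) :
    (∫ τ in a..b, w τ) i = ∫ τ in a..b, w τ i :=
  ((ContinuousLinearMap.proj i : (ι → ℝ) →L[ℝ] ℝ).intervalIntegral_comp_comm hw).symm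

theorem intervalIntegral_vecMul {w : ℝ → ι → ℝ}
    (hw : IntervalIntegrable w MeasureTheory.volume a b) (M : Matrix ι ι ℝ) :
    ∫ τ in a..b, w τ ᵥ* M = (∫ τ in a..b, w τ) ᵥ* M :=
  (LinearMap.toContinuousLinearMap (vecMulLinear M)).intervalIntegral_comp_comm hw

theorem sum_intervalIntegral_eq_zero {w : ℝ → ι → ℝ} (hw : Continuous w)
    (hw0 : ∀ τ, ∑ i, w τ i = 0) : ∑ i, (∫ τ in a..b, w τ) i = 0 := by
  have hwi : ∀ i, IntervalIntegrable (fun τ => w τ i) MeasureTheory.volume a b :=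
    fun i => ((continuous_apply i).comp hw).intervalIntegrable a b
  simp only [intervalIntegral_pi_apply (hw.intervalIntegrable a b)]
  rw [← intervalIntegral.integral_finsetSum fun i _ => hwi i]
  simp [hw0]

theorem integral_pow_div_factorial_mul_deriv {u μ : ℝ → ℝ} (hu : ∀ x, HasDerivAt u (μ x) x)
    (hμ : Continuous μ) (n : ℕ) :
    ∫ τ in a..b, u τ ^ n / n.factorial * μ τ
      = u b ^ (n + 1) / (n + 1).factorial - u a ^ (n + 1) / (n + 1).factorial := by
  have hucont : Continuous u := continuous_iff_continuousAt.2 fun x => (hu x).continuousAt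
  refine intervalIntegral.integral_eq_sub_of_hasDerivAt
    (f := fun x => u x ^ (n + 1) / (n + 1).factorial) (fun x _ => ?_)
    ((((hucont.pow n).div_const _).mul hμ).intervalIntegrable a b)
  refine (((hu x).pow (n + 1)).div_const ((n + 1).factorial : ℝ)).congr_deriv ?_
  rw [Nat.factorial_succ]
  push_cast
  field_simp

end IntervalIntegral

section EqRows

variable {d : ℕ}

theorem eqRows_mul (c : Fin d → ℝ) (M : Matrix (Fin d) (Fin d) ℝ) :
    eqRows d c * M = eqRows d (c ᵥ* M) := by
  ext i j
  simp [eqRows, Matrix.mul_apply, vecMul, dotProduct]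

theorem eqRows_mul_eqRows (c w : Fin d → ℝ) :
    eqRows d c * eqRows d w = (∑ i, c i) • eqRows d w := by
  ext i j
  simp [eqRows, Matrix.mul_apply, Finset.sum_mul]

theorem mul_eqRows_of_rowSum_eq_zero {M : Matrix (Fin d) (Fin d) ℝ}
    (hM : ∀ i, ∑ j, M i j = 0) (w : Fin d → ℝ) : M * eqRows d w = 0 := by
  ext i j
  simp [eqRows, Matrix.mul_apply, ← Finset.sum_mul, hM]

theorem eqRows_smul (b : ℝ) (c : Fin d → ℝ) : eqRows d (b • c) = b • eqRows d c := rfl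

theorem smul_add_eqRows_apply (a : ℝ) (A : Matrix (Fin d) (Fin d) ℝ) (w : Fin d → ℝ)
    (i j : Fin d) : (a • A + eqRows d w) i j = a * A i j + w j := rfl

variable {Q0 : Matrix (Fin d) (Fin d) ℝ}

theorem rowSum_pow_succ_eq_zero (hQ0 : ∀ i, ∑ j, Q0 i j = 0) (m : ℕ) (i : Fin d) :
    ∑ j, (Q0 ^ (m + 1)) i j = 0 := by
  simp only [pow_succ, Matrix.mul_apply]
  rw [Finset.sum_comm]
  simp [← Finset.mul_sum, hQ0]

theorem sum_vecMul_pow_eq_zero (hQ0 : ∀ i, ∑ j, Q0 i j = 0) {v : Fin d → ℝ}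
    (hv : ∑ i, v i = 0) (m : ℕ) : ∑ j, (v ᵥ* Q0 ^ m) j = 0 := by
  cases m with
  | zero => simpa using hv
  | succ m =>
    simp only [vecMul, dotProduct]
    rw [Finset.sum_comm]
    simp [← Finset.mul_sum, rowSum_pow_succ_eq_zero hQ0]

theorem smul_pow_add_eqRows_mul (hQ0 : ∀ i, ∑ j, Q0 i j = 0) {c : Fin d → ℝ}
    (hc : ∑ i, c i = 0) (a b : ℝ) (w : Fin d → ℝ) (m : ℕ) :
    (a • Q0 ^ (m + 1) + eqRows d c * Q0 ^ m) * (b • Q0 + eqRows d w)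
      = (a * b) • Q0 ^ (m + 2) + eqRows d ((b • c) ᵥ* Q0 ^ (m + 1)) := by
  have h1 : Q0 ^ (m + 1) * eqRows d w = 0 :=
    mul_eqRows_of_rowSum_eq_zero (rowSum_pow_succ_eq_zero hQ0 m) w
  have h2 : eqRows d c * Q0 ^ m * eqRows d w = 0 := by
    rw [eqRows_mul, eqRows_mul_eqRows, sum_vecMul_pow_eq_zero hQ0 hc, zero_smul]
  rw [← eqRows_mul, add_mul, mul_add, mul_add, smul_mul_assoc, smul_mul_assoc, h1, h2,
    mul_smul_comm, mul_smul_comm, smul_zero, add_zero, add_zero, smul_smul, ← pow_succ,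
    mul_assoc, ← pow_succ, eqRows_smul, smul_mul_assoc]

theorem of_intervalIntegral_smul_add_eqRows {α : ℝ → ℝ} {w : ℝ → Fin d → ℝ} (hα : Continuous α)
    (hw : Continuous w) (A : Matrix (Fin d) (Fin d) ℝ) (a b : ℝ) :
    (Matrix.of fun i j => ∫ τ in a..b, (α τ • A + eqRows d (w τ)) i j)
      = (∫ τ in a..b, α τ) • A + eqRows d (∫ τ in a..b, w τ) := by
  ext i j
  simp only [Matrix.of_apply, smul_add_eqRows_apply]
  rw [intervalIntegral.integral_add (f := fun τ => α τ * A i j) (g := fun τ => w τ j)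
      ((hα.mul continuous_const).intervalIntegrable a b)
      (((continuous_apply j).comp hw).intervalIntegrable a b),
    intervalIntegral.integral_mul_const, intervalIntegral_pi_apply (hw.intervalIntegrable a b)]

end EqRows

section PeanoBaker

variable {d : ℕ} {μ : ℝ → ℝ} {q : ℝ → Fin d → ℝ} {qit : ℕ → ℝ → Fin d → ℝ}

theorem continuous_iterate_and_sum_eq_zero (hμ : Continuous μ) (hq : Continuous q)
    (hq0 : ∀ t, ∑ i, q t i = 0) (hq1 : ∀ t, qit 1 t = ∫ τ in (0:ℝ)..t, q τ)
    (hqrec : ∀ n, 1 ≤ n → ∀ t, qit (n + 1) t = ∫ τ in (0:ℝ)..t, μ τ • qit n τ) (m : ℕ) :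
    Continuous (qit (m + 1)) ∧ ∀ t, ∑ i, qit (m + 1) t i = 0 := by
  induction m with
  | zero =>
    rw [show qit 1 = fun t => ∫ τ in (0:ℝ)..t, q τ from funext hq1]
    exact ⟨intervalIntegral.continuous_primitive (hq.intervalIntegrable ·) 0,
      fun t => sum_intervalIntegral_eq_zero hq hq0⟩
  | succ m ih =>
    obtain ⟨hcont, hsum⟩ := ih
    have hint : Continuous fun τ => μ τ • qit (m + 1) τ := hμ.smul hcont
    rw [show qit (m + 2) = fun t => ∫ τ in (0:ℝ)..t, μ τ • qit (m + 1) τ from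
      funext (hqrec (m + 1) m.succ_pos)]
    exact ⟨intervalIntegral.continuous_primitive (hint.intervalIntegrable ·) 0,
      fun t => sum_intervalIntegral_eq_zero hint fun τ => by simp [← Finset.mul_sum, hsum]⟩

theorem peanoBaker_succ_eq {Q0 : Matrix (Fin d) (Fin d) ℝ} (hQ0 : ∀ i, ∑ j, Q0 i j = 0)
    (hμ : Continuous μ) (hq : Continuous q) (hq0 : ∀ t, ∑ i, q t i = 0)
    {I : ℕ → ℝ → Matrix (Fin d) (Fin d) ℝ} (hI0 : ∀ t, I 0 t = 1)
    (hIrec : ∀ n t, I (n + 1) t =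
      Matrix.of fun i j => ∫ τ in (0:ℝ)..t, (I n τ * (μ τ • Q0 + eqRows d (q τ))) i j)
    (hq1 : ∀ t, qit 1 t = ∫ τ in (0:ℝ)..t, q τ)
    (hqrec : ∀ n, 1 ≤ n → ∀ t, qit (n + 1) t = ∫ τ in (0:ℝ)..t, μ τ • qit n τ) (m : ℕ) (t : ℝ) :
    I (m + 1) t = ((∫ τ in (0:ℝ)..t, μ τ) ^ (m + 1) / (m + 1).factorial) • Q0 ^ (m + 1)
      + eqRows d (qit (m + 1) t) * Q0 ^ m := by
  set u : ℝ → ℝ := fun t => ∫ τ in (0:ℝ)..t, μ τ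
  have hu : ∀ x, HasDerivAt u (μ x) x := fun x => (hμ.integral_hasStrictDerivAt 0 x).hasDerivAt
  have hqit := continuous_iterate_and_sum_eq_zero hμ hq hq0 hq1 hqrec
  induction m generalizing t with
  | zero =>
    simp only [hIrec 0 t, hI0, one_mul]
    rw [of_intervalIntegral_smul_add_eqRows hμ hq, ← hq1]
    simp
  | succ m ih =>
    have step : ∀ τ, I (m + 1) τ * (μ τ • Q0 + eqRows d (q τ))
        = (u τ ^ (m + 1) / (m + 1).factorial * μ τ) • Q0 ^ (m + 2)
          + eqRows d ((μ τ • qit (m + 1) τ) ᵥ* Q0 ^ (m + 1)) := fun τ => by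
      rw [ih, smul_pow_add_eqRows_mul hQ0 ((hqit m).2 τ)]
    simp only [hIrec (m + 1) t, step]
    have hcont : Continuous fun τ => μ τ • qit (m + 1) τ := hμ.smul (hqit m).1
    rw [of_intervalIntegral_smul_add_eqRows (by fun_prop) (hcont.matrix_vecMul continuous_const),
      integral_pow_div_factorial_mul_deriv hu hμ,
      intervalIntegral_vecMul (hcont.intervalIntegrable _ _),
      ← hqrec (m + 1) m.succ_pos, ← eqRows_mul]
    simp [u]

end PeanoBaker

theorem stmt13_general (d : ℕ) (Q0 : Matrix (Fin d) (Fin d) ℝ)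
    (hQ0 : ∀ i, ∑ j, Q0 i j = 0)
    (μ : ℝ → ℝ) (hμ : Continuous μ)
    (q : ℝ → Fin d → ℝ) (hq : Continuous q) (hq0 : ∀ t, ∑ i, q t i = 0)
    (I : ℕ → ℝ → Matrix (Fin d) (Fin d) ℝ)
    (hI0 : ∀ t, I 0 t = 1)
    (hIrec : ∀ n t, I (n + 1) t =
      Matrix.of fun i j => ∫ τ in (0:ℝ)..t, (I n τ * (μ τ • Q0 + eqRows d (q τ))) i j)
    (qit : ℕ → ℝ → Fin d → ℝ)
    (hq1 : ∀ t, qit 1 t = ∫ τ in (0:ℝ)..t, q τ)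
    (hqrec : ∀ n, 1 ≤ n → ∀ t, qit (n + 1) t = ∫ τ in (0:ℝ)..t, μ τ • qit n τ)
    (n : ℕ) (hn : 1 ≤ n) (t : ℝ) :
    I n t = ((∫ τ in (0:ℝ)..t, μ τ) ^ n / n.factorial) • Q0 ^ n
        + eqRows d (qit n t) * Q0 ^ (n - 1) ∧
    (∑ i, qit n t i) = 0 ∧
    ∃ c : Fin d → ℝ, (∑ i, c i) = 0 ∧ eqRows d (qit n t) * Q0 ^ (n - 1) = eqRows d c := by
  obtain ⟨m, rfl⟩ := Nat.exists_eq_add_of_le' hn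
  have hsum := (continuous_iterate_and_sum_eq_zero hμ hq hq0 hq1 hqrec m).2 t
  rw [Nat.add_sub_cancel]
  exact ⟨peanoBaker_succ_eq hQ0 hμ hq hq0 hI0 hIrec hq1 hqrec m t, hsum,
    _, sum_vecMul_pow_eq_zero hQ0 hsum m, eqRows_mul _ _⟩

/-- for `Q(t) = μ(t)·Q₀ + C_{q(t)}` with `Q₀` of zero row sums, `μ` continuous,
and `q` continuous with entry sum zero, the Peano–Baker terms `I₀ = I`,
`I_{n+1}(t) = ∫₀ᵗ I_n(τ)·Q(τ) dτ` satisfy, for `n ≥ 1` and `t ≥ 0`,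
`I_n(t) = (u(t)ⁿ/n!)·Q₀ⁿ + C_{q⁽ⁿ⁾(t)}·Q₀^{n−1}` with `u(t) = ∫₀ᵗ μ`,
`q⁽¹⁾(t) = ∫₀ᵗ q(τ)dτ`, `q⁽ⁿ⁺¹⁾(t) = ∫₀ᵗ μ(τ)·q⁽ⁿ⁾(τ)dτ`; moreover `q⁽ⁿ⁾(t)` has entry sum
zero, so the second summand is a traceless equal-rows matrix. -/
theorem stmt13 (d : ℕ) (hd : 1 ≤ d) (Q0 : Matrix (Fin d) (Fin d) ℝ)
    (hQ0 : ∀ i, ∑ j, Q0 i j = 0)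
    (μ : ℝ → ℝ) (hμ : Continuous μ)
    (q : ℝ → Fin d → ℝ) (hq : Continuous q) (hq0 : ∀ t, ∑ i, q t i = 0)
    (I : ℕ → ℝ → Matrix (Fin d) (Fin d) ℝ)
    (hI0 : ∀ t, I 0 t = 1)
    (hIrec : ∀ n t, I (n + 1) t =
      Matrix.of fun i j => ∫ τ in (0:ℝ)..t, (I n τ * (μ τ • Q0 + eqRows d (q τ))) i j)
    (qit : ℕ → ℝ → Fin d → ℝ)
    (hq1 : ∀ t, qit 1 t = ∫ τ in (0:ℝ)..t, q τ)
    (hqrec : ∀ n, 1 ≤ n → ∀ t, qit (n + 1) t = ∫ τ in (0:ℝ)..t, μ τ • qit n τ)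
    (n : ℕ) (hn : 1 ≤ n) (t : ℝ) (ht : 0 ≤ t) :
    I n t = ((∫ τ in (0:ℝ)..t, μ τ) ^ n / n.factorial) • Q0 ^ n
        + eqRows d (qit n t) * Q0 ^ (n - 1) ∧
    (∑ i, qit n t i) = 0 ∧
    ∃ c : Fin d → ℝ, (∑ i, c i) = 0 ∧ eqRows d (qit n t) * Q0 ^ (n - 1) = eqRows d c :=
  stmt13_general d Q0 hQ0 μ hμ q hq hq0 I hI0 hIrec qit hq1 hqrec n hn t
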